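/- For every θ > 0, the internal path length I_n^{(θ)} of a Hoppe tree with n nodes and parameter θ has variance Var(I_n^{(θ)}) = (2/(θ+1) − Ψ₁(θ+1)) n² + o(n²) as n → ∞, where Ψ₁ denotes the trigamma function (the second derivative of log Γ). -/

import Mathlib

open MeasureTheory ProbabilityTheory Real Filter Topology

noncomputable section

/-- Depth of node `i` in the Hoppe tree grown from the parent choices `U`:
`U k ω` is the parent of node `k + 2` (a node in `{1, …, k + 1}`, almost surely);
node `1` is the root. The `min` clipping is irrelevant almost surely. -/
def hoppeDepth {Ω : Type*} (U : ℕ → Ω → ℕ) (ω : Ω) : ℕ → ℕ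
  | 0 => 0
  | 1 => 0
  | n + 2 => hoppeDepth U ω (min (U n ω) (n + 1)) + 1
  decreasing_by omega

/-- The parent choices of a Hoppe tree with parameter `θ`: `U k` is the (random) parent
of node `k + 2`, the choices being independent, node `k + 2` choosing its parent among
nodes `1, …, k + 1`, namely the root `1` with probability `θ / (θ + k)` and each other
node with probability `1 / (θ + k)`. -/
structure IsHoppeParents {Ω : Type*} [MeasurableSpace Ω] (θ : ℝ) (μ : Measure Ω)
    (U : ℕ → Ω → ℕ) : Prop where
  meas : ∀ k, Measurable (U k)
  indep : iIndepFun U μ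
  root : ∀ k : ℕ, μ {ω | U k ω = 1} = ENNReal.ofReal (θ / (θ + k))
  nonroot : ∀ k j : ℕ, 2 ≤ j → j ≤ k + 1 → μ {ω | U k ω = j} = ENNReal.ofReal (1 / (θ + k))
  range : ∀ k : ℕ, μ {ω | 1 ≤ U k ω ∧ U k ω ≤ k + 1} = 1

/-- Height of the Hoppe tree with `n` nodes: maximal depth over nodes `1, …, n`. -/
def hoppeHeight {Ω : Type*} (U : ℕ → Ω → ℕ) (ω : Ω) (n : ℕ) : ℕ :=
  (Finset.Icc 1 n).sup (fun i => hoppeDepth U ω i)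

/-- Internal path length of the Hoppe tree with `n` nodes: sum of the depths of
nodes `1, …, n`. -/
def hoppePathLength {Ω : Type*} (U : ℕ → Ω → ℕ) (ω : Ω) (n : ℕ) : ℕ :=
  ∑ i ∈ Finset.Icc 1 n, hoppeDepth U ω i

/-- Number of leaves of the Hoppe tree with `n` nodes: nodes `j ∈ {1, …, n}` that are
the parent of no node `k ∈ {2, …, n}`. -/
def hoppeLeafCount {Ω : Type*} (U : ℕ → Ω → ℕ) (ω : Ω) (n : ℕ) : ℕ :=
  ((Finset.Icc 1 n).filter (fun j : ℕ => ∀ k ∈ Finset.Icc (2 : ℕ) n, U (k - 2) ω ≠ j)).card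


/-!
Node `n + 2` chooses its parent independently of the first `n` choices: the root with
probability `θ / (θ + n)` and each of the nodes `2, …, n + 1` with probability `1 / (θ + n)`.
As the root has depth `0`, averaging over this choice turns the parent's depth `D` and its square
into `I / (θ + n)` and `Q / (θ + n)`, where `I` is the path length and `Q` the sum of squared
depths of the first `n + 1` nodes. So `E I`, `E Q` and `E I²` obey a closed linear recursion,
solved exactly with `H_r(n) = ∑_{i<n} (θ + i + 1)⁻ʳ`:
`Var I_{n+1} = (θ+n)(θ+n+1)(2/(θ+1) - 2/(θ+n+1) - H_2(n)) - (θ+n)(H_1(n) - H_2(n))`.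
Since `H_1(n) = o(n)` and `H_2(n) → Ψ₁(θ + 1)`, dividing by `(n + 1)²` gives the limit.
-/

open Finset

section IndependentAveraging

variable {Ω α β : Type*} [MeasurableSpace Ω] {μ : Measure Ω}

theorem Function.FactorsThrough.integrable [IsFiniteMeasure μ] [MeasurableSpace α] [Countable α]
    [MeasurableSingletonClass α] {X : Ω → α} (hX : Measurable X) {s : Finset α}
    (hs : ∀ᵐ ω ∂μ, X ω ∈ s) {g : Ω → ℝ} (hg : g.FactorsThrough X) : Integrable g μ := by
  rw [← hg.extend_comp fun _ => (0 : ℝ)]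
  refine Integrable.of_bound ((measurable_of_countable _).comp hX).aestronglyMeasurable
    (∑ x ∈ s, ‖Function.extend X g 0 x‖) ?_
  filter_upwards [hs] with ω hω
  exact single_le_sum (f := fun x => ‖Function.extend X g 0 x‖) (fun _ _ => norm_nonneg _) hω

theorem ProbabilityTheory.IndepFun.of_factorsThrough_left [MeasurableSpace α] [Countable α]
    [MeasurableSingletonClass α] [MeasurableSpace β] {X : Ω → α} {Y : Ω → β}
    (h : IndepFun X Y μ) {g : Ω → ℝ} (hg : g.FactorsThrough X) : IndepFun g Y μ := by
  rw [← hg.extend_comp fun _ => (0 : ℝ)]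
  exact h.comp (measurable_of_countable _) measurable_id

theorem integral_comp_eq_sum_of_indepFun [MeasurableSpace β] [MeasurableSingletonClass β]
    {Y : Ω → β} (hY : Measurable Y) {t : Finset β} (ht : ∀ᵐ ω ∂μ, Y ω ∈ t) {g : β → Ω → ℝ}
    (hg : ∀ j ∈ t, Integrable (g j) μ) (hind : ∀ j ∈ t, IndepFun (g j) Y μ) :
    ∫ ω, g (Y ω) ω ∂μ = ∑ j ∈ t, μ.real (Y ⁻¹' {j}) * ∫ ω, g j ω ∂μ := by
  classical
  have hφ (j : β) : Measurable (({j} : Set β).indicator (1 : β → ℝ)) :=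
    measurable_one.indicator (measurableSet_singleton j)
  have hdecomp : (fun ω => g (Y ω) ω) =ᵐ[μ]
      fun ω => ∑ j ∈ t, g j ω * ({j} : Set β).indicator 1 (Y ω) := by
    filter_upwards [ht] with ω hω
    rw [sum_eq_single_of_mem _ hω fun j _ hj => by simp [Ne.symm hj]]
    simp
  rw [integral_congr_ae hdecomp, integral_finsetSum _ fun j hj =>
    ((hg j hj).indicator (hY (measurableSet_singleton j))).congr
      (Eventually.of_forall fun ω => by by_cases h : Y ω = j <;> simp [h])]
  refine sum_congr rfl fun j hj => ?_
  refine (((hind j hj).comp measurable_id (hφ j)).integral_fun_mul_eq_mul_integral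
    (hg j hj).aestronglyMeasurable ((hφ j).comp hY).aestronglyMeasurable).trans ?_
  rw [mul_comm, show ({j} : Set β).indicator 1 ∘ Y = (Y ⁻¹' {j}).indicator 1 from rfl,
    integral_indicator_one (hY (measurableSet_singleton j))]
  rfl

end IndependentAveraging

section HoppeTree

variable {Ω : Type*}

/-- The parent of node `n + 2`. -/
def hoppeParent (U : ℕ → Ω → ℕ) (n : ℕ) (ω : Ω) : ℕ :=
  min (U n ω) (n + 1)

def hoppeDepthSqSum (U : ℕ → Ω → ℕ) (ω : Ω) (m : ℕ) : ℕ :=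
  ∑ i ∈ Icc 1 m, hoppeDepth U ω i ^ 2

def parentChoices (U : ℕ → Ω → ℕ) (n : ℕ) (ω : Ω) : range n → ℕ :=
  fun i => U i ω

variable {U : ℕ → Ω → ℕ} {ω : Ω}

@[simp]
theorem hoppeDepth_one : hoppeDepth U ω 1 = 0 := by
  simp [hoppeDepth]

theorem hoppeDepth_add_two (n : ℕ) :
    hoppeDepth U ω (n + 2) = hoppeDepth U ω (hoppeParent U n ω) + 1 := by
  rw [hoppeDepth, hoppeParent]

theorem hoppeDepth_congr {Ω' : Type*} {V : ℕ → Ω' → ℕ} {ω' : Ω'} {j : ℕ}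
    (h : ∀ k, k + 2 ≤ j → U k ω = V k ω') : hoppeDepth U ω j = hoppeDepth V ω' j := by
  induction j using Nat.strong_induction_on with
  | _ j ih =>
    match j with
    | 0 | 1 => simp [hoppeDepth]
    | n + 2 =>
      rw [hoppeDepth, hoppeDepth, h n le_rfl, ih _ (by omega) fun k hk => h k (by omega)]

theorem hoppeDepth_eq_of_parentChoices_eq {ω' : Ω} {n j : ℕ}
    (h : parentChoices U n ω = parentChoices U n ω') (hj : j ≤ n + 1) :
    hoppeDepth U ω j = hoppeDepth U ω' j :=
  hoppeDepth_congr fun k hk => congrFun h ⟨k, mem_range.2 (by omega)⟩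

theorem hoppePathLength_factorsThrough {n m : ℕ} (hm : m ≤ n + 1) :
    (fun ω => hoppePathLength U ω m).FactorsThrough (parentChoices U n) := fun _ _ h =>
  sum_congr rfl fun _ hj => hoppeDepth_eq_of_parentChoices_eq h ((mem_Icc.1 hj).2.trans hm)

theorem hoppeDepthSqSum_factorsThrough {n m : ℕ} (hm : m ≤ n + 1) :
    (fun ω => hoppeDepthSqSum U ω m).FactorsThrough (parentChoices U n) := fun _ _ h =>
  sum_congr rfl fun _ hj => by
    rw [hoppeDepth_eq_of_parentChoices_eq h ((mem_Icc.1 hj).2.trans hm)]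

@[simp]
theorem hoppePathLength_one : hoppePathLength U ω 1 = 0 := by
  simp [hoppePathLength]

@[simp]
theorem hoppeDepthSqSum_one : hoppeDepthSqSum U ω 1 = 0 := by
  simp [hoppeDepthSqSum]

theorem hoppePathLength_add_two (n : ℕ) : hoppePathLength U ω (n + 2)
    = hoppePathLength U ω (n + 1) + (hoppeDepth U ω (hoppeParent U n ω) + 1) := by
  rw [hoppePathLength, hoppePathLength, sum_Icc_succ_top (by omega), hoppeDepth_add_two]

theorem hoppeDepthSqSum_add_two (n : ℕ) : hoppeDepthSqSum U ω (n + 2)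
    = hoppeDepthSqSum U ω (n + 1) + (hoppeDepth U ω (hoppeParent U n ω) + 1) ^ 2 := by
  rw [hoppeDepthSqSum, hoppeDepthSqSum, sum_Icc_succ_top (by omega), hoppeDepth_add_two]

theorem sum_Icc_two_hoppeDepth_pow {k : ℕ} (hk : k ≠ 0) (m : ℕ) :
    ∑ j ∈ Icc 2 m, (hoppeDepth U ω j : ℝ) ^ k
      = ∑ j ∈ Icc 1 m, (hoppeDepth U ω j : ℝ) ^ k := by
  rcases Nat.eq_zero_or_pos m with rfl | hm
  · simp
  rw [← insert_Icc_add_one_left_eq_Icc (show 1 ≤ m from hm), sum_insert (by simp)]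
  simp [hk]

end HoppeTree

namespace IsHoppeParents

variable {Ω : Type*} [MeasurableSpace Ω] {θ : ℝ} {μ : Measure Ω} {U : ℕ → Ω → ℕ}

theorem measurable_parentChoices (hU : IsHoppeParents θ μ U) (n : ℕ) :
    Measurable (parentChoices U n) :=
  measurable_pi_lambda _ fun i => hU.meas i

theorem indepFun_of_factorsThrough (hU : IsHoppeParents θ μ U) {n : ℕ} {g : Ω → ℝ}
    (hg : g.FactorsThrough (parentChoices U n)) : IndepFun g (U n) μ := by
  have hdisj : Disjoint (Finset.range n) {n} := by simp
  exact ((hU.indep.indepFun_finset _ _ hdisj hU.meas).comp measurable_id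
    (measurable_pi_apply ⟨n, mem_singleton_self n⟩)).of_factorsThrough_left hg

theorem measureReal_root (hU : IsHoppeParents θ μ U) (hθ : 0 < θ) (n : ℕ) :
    μ.real (U n ⁻¹' {1}) = θ / (θ + n) := by
  rw [measureReal_def, show U n ⁻¹' {1} = {ω | U n ω = 1} from rfl, hU.root n,
    ENNReal.toReal_ofReal (by positivity)]

theorem measureReal_nonroot (hU : IsHoppeParents θ μ U) (hθ : 0 < θ) {n j : ℕ} (h2 : 2 ≤ j)
    (hj : j ≤ n + 1) : μ.real (U n ⁻¹' {j}) = 1 / (θ + n) := by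
  rw [measureReal_def, show U n ⁻¹' {j} = {ω | U n ω = j} from rfl, hU.nonroot n j h2 hj,
    ENNReal.toReal_ofReal (by positivity)]

variable [IsProbabilityMeasure μ]

theorem ae_mem_Icc (hU : IsHoppeParents θ μ U) (n : ℕ) :
    ∀ᵐ ω ∂μ, U n ω ∈ Icc 1 (n + 1) := by
  have hmeas : MeasurableSet {ω | 1 ≤ U n ω ∧ U n ω ≤ n + 1} :=
    (measurableSet_le measurable_const (hU.meas n)).inter
      (measurableSet_le (hU.meas n) measurable_const)
  simpa only [mem_Icc, measure_univ] using
    (ae_iff_measure_eq hmeas.nullMeasurableSet).2 ((hU.range n).trans measure_univ.symm)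

theorem ae_parentChoices_mem (hU : IsHoppeParents θ μ U) (n : ℕ) :
    ∀ᵐ ω ∂μ, parentChoices U n ω ∈
      Fintype.piFinset fun i : Finset.range n => Icc 1 ((i : ℕ) + 1) := by
  simpa only [Fintype.mem_piFinset, parentChoices] using
    ae_all_iff.2 fun i : Finset.range n => hU.ae_mem_Icc i

theorem integrable_of_factorsThrough (hU : IsHoppeParents θ μ U) {n : ℕ} {g : Ω → ℝ}
    (hg : g.FactorsThrough (parentChoices U n)) : Integrable g μ :=
  hg.integrable (hU.measurable_parentChoices n) (hU.ae_parentChoices_mem n)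

theorem integral_comp_hoppeParent (hU : IsHoppeParents θ μ U) (hθ : 0 < θ) (n : ℕ)
    {g : ℕ → Ω → ℝ} (hg : ∀ j ≤ n + 1, (g j).FactorsThrough (parentChoices U n)) :
    ∫ ω, g (hoppeParent U n ω) ω ∂μ
      = ∫ ω, (θ * g 1 ω + ∑ j ∈ Icc 2 (n + 1), g j ω) / (θ + n) ∂μ := by
  have hint (j : ℕ) (hj : j ≤ n + 1) : Integrable (g j) μ :=
    hU.integrable_of_factorsThrough (hg j hj)
  have hsum : Integrable (fun ω => ∑ j ∈ Icc 2 (n + 1), g j ω) μ :=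
    integrable_finsetSum _ fun j hj => hint j (mem_Icc.1 hj).2
  calc ∫ ω, g (hoppeParent U n ω) ω ∂μ
      = ∑ j ∈ Icc 1 (n + 1), μ.real (U n ⁻¹' {j}) * ∫ ω, g j ω ∂μ := by
        refine (integral_comp_eq_sum_of_indepFun (g := fun j => g (min j (n + 1)))
          (hU.meas n) (hU.ae_mem_Icc n) (fun j _ => hint _ (min_le_right _ _))
          fun j _ => hU.indepFun_of_factorsThrough (hg _ (min_le_right _ _))).trans
          (sum_congr rfl fun j hj => ?_)
        rw [min_eq_left (mem_Icc.1 hj).2]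
    _ = (θ * ∫ ω, g 1 ω ∂μ + ∑ j ∈ Icc 2 (n + 1), ∫ ω, g j ω ∂μ) / (θ + n) := by
        rw [← insert_Icc_add_one_left_eq_Icc (show 1 ≤ n + 1 by omega), one_add_one_eq_two,
          sum_insert (by simp), hU.measureReal_root hθ, sum_congr rfl fun j hj => by
            rw [hU.measureReal_nonroot hθ (mem_Icc.1 hj).1 (mem_Icc.1 hj).2], ← mul_sum]
        field_simp
    _ = _ := by
        rw [integral_div, integral_add ((hint 1 (by omega)).const_mul θ) hsum,
          integral_const_mul, integral_finsetSum _ fun j hj => hint j (mem_Icc.1 hj).2]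

theorem integral_quadratic_depth_hoppeParent (hU : IsHoppeParents θ μ U) (hθ : 0 < θ) (n : ℕ)
    {A B C : Ω → ℝ} (hA : A.FactorsThrough (parentChoices U n))
    (hB : B.FactorsThrough (parentChoices U n)) (hC : C.FactorsThrough (parentChoices U n)) :
    ∫ ω, A ω + B ω * hoppeDepth U ω (hoppeParent U n ω)
        + C ω * (hoppeDepth U ω (hoppeParent U n ω) : ℝ) ^ 2 ∂μ
      = ∫ ω, A ω + (B ω * hoppePathLength U ω (n + 1)
        + C ω * hoppeDepthSqSum U ω (n + 1)) / (θ + n) ∂μ := by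
  refine (hU.integral_comp_hoppeParent hθ n (g := fun j ω => A ω + B ω * hoppeDepth U ω j
    + C ω * (hoppeDepth U ω j : ℝ) ^ 2) fun j hj ω ω' h => ?_).trans
    (integral_congr_ae (Eventually.of_forall fun ω => ?_))
  · simp only [hA h, hB h, hC h, hoppeDepth_eq_of_parentChoices_eq h hj]
  · -- the root has depth `0`, so its term is `θ * A ω`
    have hsum := sum_Icc_two_hoppeDepth_pow (U := U) (ω := ω) one_ne_zero (n + 1)
    simp only [pow_one] at hsum
    simp only [hoppeDepth_one, sum_add_distrib, ← mul_sum, sum_const, Nat.card_Icc, hsum,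
      sum_Icc_two_hoppeDepth_pow two_ne_zero, hoppePathLength, hoppeDepthSqSum]
    push_cast
    field_simp
    ring

theorem integral_moment_combination (hU : IsHoppeParents θ μ U) (m : ℕ) (a b c d : ℝ) :
    ∫ ω, a * (hoppePathLength U ω m : ℝ) ^ 2 + b * hoppePathLength U ω m
        + c * hoppeDepthSqSum U ω m + d ∂μ
      = a * ∫ ω, (hoppePathLength U ω m : ℝ) ^ 2 ∂μ
        + b * ∫ ω, (hoppePathLength U ω m : ℝ) ∂μ
        + c * ∫ ω, (hoppeDepthSqSum U ω m : ℝ) ∂μ + d := by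
  have hI := hoppePathLength_factorsThrough (U := U) (Nat.le_succ m)
  have hQ := hoppeDepthSqSum_factorsThrough (U := U) (Nat.le_succ m)
  have hI2 : Integrable (fun ω => (hoppePathLength U ω m : ℝ) ^ 2) μ :=
    hU.integrable_of_factorsThrough (hI.comp_left fun x : ℕ => (x : ℝ) ^ 2)
  have hI1 : Integrable (fun ω => (hoppePathLength U ω m : ℝ)) μ :=
    hU.integrable_of_factorsThrough (hI.comp_left fun x : ℕ => (x : ℝ))
  have hQ1 : Integrable (fun ω => (hoppeDepthSqSum U ω m : ℝ)) μ :=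
    hU.integrable_of_factorsThrough (hQ.comp_left fun x : ℕ => (x : ℝ))
  rw [integral_add (by fun_prop) (by fun_prop), integral_add (by fun_prop) (by fun_prop),
    integral_add (by fun_prop) (by fun_prop), integral_const_mul, integral_const_mul,
    integral_const_mul, integral_const]
  simp

end IsHoppeParents

def shiftedHarmonic (θ : ℝ) (r n : ℕ) : ℝ :=
  ∑ i ∈ range n, (1 / (θ + i + 1)) ^ r

theorem shiftedHarmonic_succ (θ : ℝ) (r n : ℕ) :
    shiftedHarmonic θ r (n + 1) = shiftedHarmonic θ r n + (1 / (θ + n + 1)) ^ r :=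
  sum_range_succ _ n

/-- The variance of the path length of the tree with `n + 1` nodes, in closed form. -/
def hoppePathLengthVariance (θ : ℝ) (n : ℕ) : ℝ :=
  (θ + n) * (θ + n + 1) * (2 / (θ + 1) - 2 / (θ + n + 1) - shiftedHarmonic θ 2 n)
    - (θ + n) * (shiftedHarmonic θ 1 n - shiftedHarmonic θ 2 n)

namespace IsHoppeParents

variable {Ω : Type*} [MeasurableSpace Ω] {θ : ℝ} {μ : Measure Ω} [IsProbabilityMeasure μ]
  {U : ℕ → Ω → ℕ}

theorem integral_hoppePathLength_add_two (hU : IsHoppeParents θ μ U) (hθ : 0 < θ)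
    (n : ℕ) :
    ∫ ω, (hoppePathLength U ω (n + 2) : ℝ) ∂μ
      = (1 + 1 / (θ + n)) * ∫ ω, (hoppePathLength U ω (n + 1) : ℝ) ∂μ + 1 := by
  calc ∫ ω, (hoppePathLength U ω (n + 2) : ℝ) ∂μ
      = ∫ ω, ((hoppePathLength U ω (n + 1) : ℝ) + 1)
          + 1 * hoppeDepth U ω (hoppeParent U n ω)
          + 0 * (hoppeDepth U ω (hoppeParent U n ω) : ℝ) ^ 2 ∂μ := by
        congr 1 with ω
        rw [hoppePathLength_add_two]
        push_cast
        ring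
    _ = ∫ ω, ((hoppePathLength U ω (n + 1) : ℝ) + 1) + (1 * hoppePathLength U ω (n + 1)
          + 0 * hoppeDepthSqSum U ω (n + 1)) / (θ + n) ∂μ :=
        hU.integral_quadratic_depth_hoppeParent hθ n
          ((hoppePathLength_factorsThrough le_rfl).comp_left fun x : ℕ => (x : ℝ) + 1)
          (fun _ _ _ => rfl) (fun _ _ _ => rfl)
    _ = ∫ ω, 0 * (hoppePathLength U ω (n + 1) : ℝ) ^ 2
          + (1 + 1 / (θ + n)) * hoppePathLength U ω (n + 1)
          + 0 * hoppeDepthSqSum U ω (n + 1) + 1 ∂μ := by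
        congr 1 with ω
        ring
    _ = _ := by
        rw [hU.integral_moment_combination]
        ring

theorem integral_hoppePathLength (hU : IsHoppeParents θ μ U) (hθ : 0 < θ) (n : ℕ) :
    ∫ ω, (hoppePathLength U ω (n + 1) : ℝ) ∂μ = (θ + n) * shiftedHarmonic θ 1 n := by
  induction n with
  | zero => simp [shiftedHarmonic]
  | succ n ih =>
    rw [hU.integral_hoppePathLength_add_two hθ, ih, shiftedHarmonic_succ]
    push_cast
    field_simp
    ring

theorem integral_hoppeDepthSqSum_add_two (hU : IsHoppeParents θ μ U) (hθ : 0 < θ)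
    (n : ℕ) :
    ∫ ω, (hoppeDepthSqSum U ω (n + 2) : ℝ) ∂μ
      = 2 / (θ + n) * ∫ ω, (hoppePathLength U ω (n + 1) : ℝ) ∂μ
        + (1 + 1 / (θ + n)) * ∫ ω, (hoppeDepthSqSum U ω (n + 1) : ℝ) ∂μ + 1 := by
  calc ∫ ω, (hoppeDepthSqSum U ω (n + 2) : ℝ) ∂μ
      = ∫ ω, ((hoppeDepthSqSum U ω (n + 1) : ℝ) + 1)
          + 2 * hoppeDepth U ω (hoppeParent U n ω)
          + 1 * (hoppeDepth U ω (hoppeParent U n ω) : ℝ) ^ 2 ∂μ := by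
        congr 1 with ω
        rw [hoppeDepthSqSum_add_two]
        push_cast
        ring
    _ = ∫ ω, ((hoppeDepthSqSum U ω (n + 1) : ℝ) + 1) + (2 * hoppePathLength U ω (n + 1)
          + 1 * hoppeDepthSqSum U ω (n + 1)) / (θ + n) ∂μ :=
        hU.integral_quadratic_depth_hoppeParent hθ n
          ((hoppeDepthSqSum_factorsThrough le_rfl).comp_left fun x : ℕ => (x : ℝ) + 1)
          (fun _ _ _ => rfl) (fun _ _ _ => rfl)
    _ = ∫ ω, 0 * (hoppePathLength U ω (n + 1) : ℝ) ^ 2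
          + 2 / (θ + n) * hoppePathLength U ω (n + 1)
          + (1 + 1 / (θ + n)) * hoppeDepthSqSum U ω (n + 1) + 1 ∂μ := by
        congr 1 with ω
        ring
    _ = _ := by
        rw [hU.integral_moment_combination]
        ring

theorem integral_hoppePathLength_sq_add_two (hU : IsHoppeParents θ μ U) (hθ : 0 < θ)
    (n : ℕ) :
    ∫ ω, (hoppePathLength U ω (n + 2) : ℝ) ^ 2 ∂μ
      = (1 + 2 / (θ + n)) * ∫ ω, (hoppePathLength U ω (n + 1) : ℝ) ^ 2 ∂μ
        + (2 + 2 / (θ + n)) * ∫ ω, (hoppePathLength U ω (n + 1) : ℝ) ∂μ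
        + 1 / (θ + n) * ∫ ω, (hoppeDepthSqSum U ω (n + 1) : ℝ) ∂μ + 1 := by
  calc ∫ ω, (hoppePathLength U ω (n + 2) : ℝ) ^ 2 ∂μ
      = ∫ ω, ((hoppePathLength U ω (n + 1) : ℝ) + 1) ^ 2
          + 2 * ((hoppePathLength U ω (n + 1) : ℝ) + 1) * hoppeDepth U ω (hoppeParent U n ω)
          + 1 * (hoppeDepth U ω (hoppeParent U n ω) : ℝ) ^ 2 ∂μ := by
        congr 1 with ω
        rw [hoppePathLength_add_two]
        push_cast
        ring
    _ = ∫ ω, ((hoppePathLength U ω (n + 1) : ℝ) + 1) ^ 2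
          + (2 * ((hoppePathLength U ω (n + 1) : ℝ) + 1) * hoppePathLength U ω (n + 1)
          + 1 * hoppeDepthSqSum U ω (n + 1)) / (θ + n) ∂μ :=
        hU.integral_quadratic_depth_hoppeParent hθ n
          ((hoppePathLength_factorsThrough le_rfl).comp_left fun x : ℕ => ((x : ℝ) + 1) ^ 2)
          ((hoppePathLength_factorsThrough le_rfl).comp_left fun x : ℕ => 2 * ((x : ℝ) + 1))
          (fun _ _ _ => rfl)
    _ = ∫ ω, (1 + 2 / (θ + n)) * (hoppePathLength U ω (n + 1) : ℝ) ^ 2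
          + (2 + 2 / (θ + n)) * hoppePathLength U ω (n + 1)
          + 1 / (θ + n) * hoppeDepthSqSum U ω (n + 1) + 1 ∂μ := by
        congr 1 with ω
        ring
    _ = _ := hU.integral_moment_combination _ _ _ _ _

theorem integral_hoppeDepthSqSum (hU : IsHoppeParents θ μ U) (hθ : 0 < θ) (n : ℕ) :
    ∫ ω, (hoppeDepthSqSum U ω (n + 1) : ℝ) ∂μ = (θ + n) * (shiftedHarmonic θ 1 n ^ 2
      + shiftedHarmonic θ 1 n - shiftedHarmonic θ 2 n) := by
  induction n with
  | zero => simp [shiftedHarmonic]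
  | succ n ih =>
    rw [hU.integral_hoppeDepthSqSum_add_two hθ, ih, hU.integral_hoppePathLength hθ,
      shiftedHarmonic_succ, shiftedHarmonic_succ]
    push_cast
    field_simp
    ring

theorem integral_hoppePathLength_sq (hU : IsHoppeParents θ μ U) (hθ : 0 < θ) (n : ℕ) :
    ∫ ω, (hoppePathLength U ω (n + 1) : ℝ) ^ 2 ∂μ
      = ((θ + n) * shiftedHarmonic θ 1 n) ^ 2 + hoppePathLengthVariance θ n := by
  induction n with
  | zero => simp [shiftedHarmonic, hoppePathLengthVariance]
  | succ n ih =>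
    rw [hU.integral_hoppePathLength_sq_add_two hθ, ih, hU.integral_hoppePathLength hθ,
      hU.integral_hoppeDepthSqSum hθ, hoppePathLengthVariance, hoppePathLengthVariance,
      shiftedHarmonic_succ, shiftedHarmonic_succ]
    push_cast
    field_simp
    ring

theorem variance_hoppePathLength (hU : IsHoppeParents θ μ U) (hθ : 0 < θ) (n : ℕ) :
    variance (fun ω => (hoppePathLength U ω (n + 1) : ℝ)) μ
      = hoppePathLengthVariance θ n := by
  have hI := hoppePathLength_factorsThrough (U := U) (le_refl (n + 1))
  have hI1 : Integrable (fun ω => (hoppePathLength U ω (n + 1) : ℝ)) μ :=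
    hU.integrable_of_factorsThrough (hI.comp_left fun x : ℕ => (x : ℝ))
  have hI2 : Integrable (fun ω => (hoppePathLength U ω (n + 1) : ℝ) ^ 2) μ :=
    hU.integrable_of_factorsThrough (hI.comp_left fun x : ℕ => (x : ℝ) ^ 2)
  rw [variance_eq_sub ((memLp_two_iff_integrable_sq hI1.aestronglyMeasurable).2 hI2)]
  simp only [Pi.pow_apply]
  rw [hU.integral_hoppePathLength_sq hθ, hU.integral_hoppePathLength hθ]
  ring

end IsHoppeParents


theorem tendsto_add_div_add_atTop (a b : ℝ) :
    Tendsto (fun n : ℕ => (n + a) / (n + b)) atTop (𝓝 1) := by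
  have hden : Tendsto (fun n : ℕ => (n : ℝ) + b) atTop atTop :=
    tendsto_atTop_add_const_right _ b tendsto_natCast_atTop_atTop
  simpa [add_div] using
    (tendsto_natCast_div_add_atTop b).add (tendsto_const_nhds.div_atTop hden)

theorem tendsto_one_div_add_atTop (θ : ℝ) :
    Tendsto (fun n : ℕ => 1 / (θ + n + 1)) atTop (𝓝 0) :=
  tendsto_const_nhds.div_atTop <| tendsto_atTop_add_const_right _ 1 <|
    tendsto_atTop_add_const_left _ θ tendsto_natCast_atTop_atTop

theorem summable_one_div_add_sq (θ : ℝ) : Summable fun k : ℕ => (1 / (θ + k + 1)) ^ 2 :=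
  ((Real.summable_one_div_nat_add_rpow (θ + 1) 2).2 one_lt_two).congr fun k => by
    rw [Real.rpow_two, sq_abs, one_div_pow]
    ring

theorem tendsto_shiftedHarmonic_div_succ (θ : ℝ) {r : ℕ} (hr : r ≠ 0) :
    Tendsto (fun n : ℕ => shiftedHarmonic θ r n / (n + 1)) atTop (𝓝 0) := by
  have hcesaro :
      Tendsto (fun n : ℕ => (n : ℝ)⁻¹ * shiftedHarmonic θ r n) atTop (𝓝 0) := by
    simpa [zero_pow hr, shiftedHarmonic] using ((tendsto_one_div_add_atTop θ).pow r).cesaro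
  simpa using ((tendsto_natCast_div_add_atTop (1 : ℝ)).mul hcesaro).congr'
    ((eventually_ne_atTop 0).mono fun n hn => by field_simp)

theorem tendsto_hoppePathLengthVariance_div_sq (θ : ℝ) :
    Tendsto (fun n : ℕ => hoppePathLengthVariance θ n / ((n : ℝ) + 1) ^ 2) atTop
      (𝓝 (2 / (θ + 1) - ∑' k : ℕ, (1 / (θ + (k : ℝ) + 1)) ^ 2)) := by
  have hbracket : Tendsto (fun n : ℕ => 2 / (θ + 1) - 2 / (θ + n + 1) - shiftedHarmonic θ 2 n)
      atTop (𝓝 (2 / (θ + 1) - 2 * 0 - ∑' k : ℕ, (1 / (θ + (k : ℝ) + 1)) ^ 2)) := by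
    refine (tendsto_const_nhds.sub ((tendsto_one_div_add_atTop θ).const_mul 2)).sub
      (summable_one_div_add_sq θ).hasSum.tendsto_sum_nat |>.congr fun n => ?_
    rw [mul_one_div, shiftedHarmonic]
  have hlin := tendsto_add_div_add_atTop θ 1
  have hquad := hlin.mul (tendsto_add_div_add_atTop (θ + 1) 1)
  have hrest := (tendsto_shiftedHarmonic_div_succ θ one_ne_zero).sub
    (tendsto_shiftedHarmonic_div_succ θ two_ne_zero)
  refine ((hquad.mul hbracket).sub (hlin.mul hrest)).congr (fun n => ?_) |>.trans ?_
  · rw [hoppePathLengthVariance]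
    field_simp
    ring
  · simp


/-- Asymptotics of the variance of the internal path length of a Hoppe tree:
`Var(I_n) = (2/(θ+1) - Ψ₁(θ+1)) n² + o(n²)`, where
`Ψ₁(θ+1) = ∑_{k=1}^∞ 1/(θ+k)²` is the trigamma function at `θ + 1`. -/
theorem hoppe_path_length_variance
    {Ω : Type*} [MeasurableSpace Ω]
    (θ : ℝ) (hθ : 0 < θ)
    (μ : Measure Ω) [IsProbabilityMeasure μ] (U : ℕ → Ω → ℕ) (hU : IsHoppeParents θ μ U) :
    Tendsto (fun n : ℕ =>
        variance (fun ω => (hoppePathLength U ω n : ℝ)) μ / (n : ℝ) ^ 2)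
      atTop (𝓝 (2 / (θ + 1) - ∑' k : ℕ, (1 / (θ + (k : ℝ) + 1)) ^ 2)) := by
  refine (tendsto_add_atTop_iff_nat 1).1 ?_
  simp only [hU.variance_hoppePathLength hθ, Nat.cast_add, Nat.cast_one]
  exact tendsto_hoppePathLengthVariance_div_sq θ

end
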